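/- arXiv:2208.01646 — 2 statements merged into one kernel-verified Lean document; each statement's English description precedes it below -/
import Mathlib

section
/- (Lemma on the derivative of the discriminant, first part.) Assume γ is a continuous Lyapunov exponent for the ergodic family H_ω. Then for ℙ-almost every ω: for every ε > 0 there exists q₀ such that for all q > q₀ and all E ∈ K, |Δ'_{ω,q}(E)| ≤ e^{(γ(E)+ε)q}, where Δ'_{ω,q} is the derivative of Δ_{ω,q} with respect to E; equivalently, limsup_{q→∞} sup_{E∈K} (q^{-1}·log|Δ'_{ω,q}(E)| − γ(E)) ≤ 0 almost surely. -/
open MeasureTheory Filter Topology Matrix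

noncomputable section

/-- The one-step transfer matrix `A(t)`, with rows `(t, -1)` and `(1, 0)`. -/
def Astep (t : ℝ) : Matrix (Fin 2) (Fin 2) ℝ := !![t, -1; 1, 0]

/-- The `q`-step transfer matrix `A(E - V (q-1)) ⋯ A(E - V 0)`. -/
def transfer (V : ℕ → ℝ) : ℕ → ℝ → Matrix (Fin 2) (Fin 2) ℝ
  | 0, _ => 1
  | n + 1, E => Astep (E - V n) * transfer V n E

/-- The (ℓ² → ℓ²) operator norm of a 2 × 2 real matrix. -/
def opNorm2 (M : Matrix (Fin 2) (Fin 2) ℝ) : ℝ :=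
  ‖(Matrix.toEuclideanCLM (𝕜 := ℝ) M : EuclideanSpace ℝ (Fin 2) →L[ℝ] EuclideanSpace ℝ (Fin 2))‖

/-- The discriminant `Δ_q(E) = Tr Φ_q(E)`. -/
def disc (V : ℕ → ℝ) (q : ℕ) (E : ℝ) : ℝ := (transfer V q E).trace

/-- `B` is a band of the discriminant `Δ`, i.e. a connected component of `Δ⁻¹([-2,2])`. -/
def IsBand (Δ : ℝ → ℝ) (B : Set ℝ) : Prop :=
  ∃ E₀ ∈ {E : ℝ | Δ E ∈ Set.Icc (-2 : ℝ) 2},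
    B = connectedComponentIn {E : ℝ | Δ E ∈ Set.Icc (-2 : ℝ) 2} E₀

/-- The centre (midpoint) of a band. -/
def bandCentre (B : Set ℝ) : ℝ := (sInf B + sSup B) / 2

/-- The compact interval `K = [-‖f‖_∞ - 12, ‖f‖_∞ + 12]`. -/
def Kset {Ω : Type*} (f : Ω → ℝ) : Set ℝ :=
  Set.Icc (-(⨆ ω, |f ω|) - 12) ((⨆ ω, |f ω|) + 12)

/-- The distance on the discrete circle `ℤ_q`. -/
def cdist (q : ℕ) (x y : ZMod q) : ℕ := min (x - y).val (y - x).val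

/-- The Floquet operator `H_q[κ]` on `ℂ^{ℤ_q}`, as a matrix:
`(H ψ)(x) = e^{iκ} ψ(x-1) + e^{-iκ} ψ(x+1) + V(x) ψ(x)`. -/
def HqM (q : ℕ) [NeZero q] (V : ZMod q → ℝ) (κ : ℝ) : Matrix (ZMod q) (ZMod q) ℂ :=
  fun x y =>
    (if y = x - 1 then Complex.exp (κ * Complex.I) else 0) +
    (if y = x + 1 then Complex.exp (-(κ * Complex.I)) else 0) +
    (if y = x then (V x : ℂ) else 0)

/-- Dirichlet restriction of a matrix on `ℤ_q` to the arc `B_n(x)` of half-length `n`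
centred at `x`. -/
def arcRestrict (q : ℕ) [NeZero q] (M : Matrix (ZMod q) (ZMod q) ℂ) (x : ZMod q) (n : ℕ) :
    Matrix {y : ZMod q // cdist q x y ≤ n} {y : ZMod q // cdist q x y ≤ n} ℂ :=
  M.submatrix Subtype.val Subtype.val

/-- The Green function `(H↾B_n(x) - E)⁻¹` of the arc `B_n(x)`. -/
def greenArc (q : ℕ) [NeZero q] (M : Matrix (ZMod q) (ZMod q) ℂ) (x : ZMod q) (n : ℕ) (E : ℝ) :
    Matrix {y : ZMod q // cdist q x y ≤ n} {y : ZMod q // cdist q x y ≤ n} ℂ :=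
  (arcRestrict q M x n - (E : ℂ) • 1)⁻¹

lemma self_mem_arc (q : ℕ) (x : ZMod q) (n : ℕ) : cdist q x x ≤ n := by
  simp [cdist]

lemma addn_mem_arc (q : ℕ) (x : ZMod q) (n : ℕ) : cdist q x (x + (n : ZMod q)) ≤ n := by
  have h : (x + (n : ZMod q) - x) = (n : ZMod q) := by ring
  calc cdist q x (x + (n : ZMod q)) ≤ ((n : ZMod q)).val := by
        rw [cdist, h]; exact min_le_right _ _
    _ ≤ n := by rw [ZMod.val_natCast]; exact Nat.mod_le _ _

lemma subn_mem_arc (q : ℕ) (x : ZMod q) (n : ℕ) : cdist q x (x - (n : ZMod q)) ≤ n := by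
  have h : (x - (x - (n : ZMod q))) = (n : ZMod q) := by ring
  calc cdist q x (x - (n : ZMod q)) ≤ ((n : ZMod q)).val := by
        rw [cdist, h]; exact min_le_left _ _
    _ ≤ n := by rw [ZMod.val_natCast]; exact Nat.mod_le _ _

/-- A site `x ∈ ℤ_q` is `(E,ε,n)`-non-resonant (for the potential `V` and
Lyapunov exponent `γ`). -/
def NonResonant (q : ℕ) [NeZero q] (V : ZMod q → ℝ) (γ : ℝ → ℝ) (E ε : ℝ) (n : ℕ) (x : ZMod q) : Prop :=
  (E : ℂ) ∉ spectrum ℂ (arcRestrict q (HqM q V 0) x n) ∧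
  ‖greenArc q (HqM q V 0) x n E ⟨x, self_mem_arc q x n⟩
      ⟨x + (n : ZMod q), addn_mem_arc q x n⟩‖ < Real.exp (-(γ E - ε) * n) ∧
  ‖greenArc q (HqM q V 0) x n E ⟨x, self_mem_arc q x n⟩
      ⟨x - (n : ZMod q), subn_mem_arc q x n⟩‖ < Real.exp (-(γ E - ε) * n)

/-- `Q_NR(ε,n,q)`: for every `E ∈ K` the set of `(E,ε,n)`-resonant sites has diameter
at most `2n`. -/
def QNRpot (q : ℕ) [NeZero q] (V : ZMod q → ℝ) (γ : ℝ → ℝ) (K : Set ℝ) (ε : ℝ) (n : ℕ) : Prop :=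
  ∀ E ∈ K, ∀ x y : ZMod q,
    ¬ NonResonant q V γ E ε n x → ¬ NonResonant q V γ E ε n y → cdist q x y ≤ 2 * n

/-- `Q_Sep(ε,q)`: the eigenvalues of `H_q[ω,0]` are simple (the spectrum of the `q × q`
Hermitian matrix has exactly `q` elements) and any two distinct eigenvalues differ by at
least `e^{-εq}`. -/
def QSeppot (q : ℕ) [NeZero q] (V : ZMod q → ℝ) (ε : ℝ) : Prop :=
  (spectrum ℂ (HqM q V 0)).ncard = q ∧
  ∀ E ∈ spectrum ℂ (HqM q V 0), ∀ E' ∈ spectrum ℂ (HqM q V 0), E ≠ E' →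
    Real.exp (-ε * q) ≤ ‖E - E'‖

lemma HqM_isHermitian (q : ℕ) [NeZero q] (V : ZMod q → ℝ) (κ : ℝ) :
    (HqM q V κ).IsHermitian := by
  have hs1 : (starRingEnd ℂ) (Complex.exp (κ * Complex.I)) = Complex.exp (-(κ * Complex.I)) := by
    rw [← Complex.exp_conj]
    congr 1
    simp [_root_.map_mul, Complex.conj_ofReal, Complex.conj_I]
  have hs2 : (starRingEnd ℂ) (Complex.exp (-(κ * Complex.I))) = Complex.exp (κ * Complex.I) := by
    rw [← Complex.exp_conj]
    congr 1
    simp [_root_.map_mul, Complex.conj_ofReal, Complex.conj_I]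
  ext x y
  simp only [HqM, Matrix.conjTranspose_apply, star_add, RCLike.star_def]
  rw [apply_ite (starRingEnd ℂ), apply_ite (starRingEnd ℂ), apply_ite (starRingEnd ℂ)]
  simp only [map_zero, hs1, hs2, Complex.conj_ofReal]
  have e1 : (x = y - 1) = (y = x + 1) := by
    apply propext; constructor <;> intro h <;> subst h <;> ring
  have e2 : (x = y + 1) = (y = x - 1) := by
    apply propext; constructor <;> intro h <;> subst h <;> ring
  have e3 : (x = y) = (y = x) := by
    apply propext; exact eq_comm
  simp only [e1, e2, e3]
  have e4 : (if y = x then ((V y : ℝ) : ℂ) else 0) = (if y = x then ((V x : ℝ) : ℂ) else 0) := by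
    split_ifs with h
    · rw [h]
    · rfl
  rw [e4]
  ring

/-- The eigenvalues of `H_q[κ]`, in nondecreasing order, indexed by `Fin q`. -/
def eigs (q : ℕ) [NeZero q] (V : ZMod q → ℝ) (κ : ℝ) : Fin q → ℝ :=
  let ev : Fin q → ℝ :=
    (HqM_isHermitian q V κ).eigenvalues ∘ (Fintype.equivFinOfCardEq (ZMod.card q)).symm
  ev ∘ Tuple.sort ev

/-- The `M×M` Dirichlet restriction `H↾[0,M-1]`: symmetric tridiagonal matrix with ones
on the off-diagonals and diagonal `V 0, …, V (M-1)`, viewed as acting on `ℂ^M`. -/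
def dirichletM (V : ℕ → ℝ) (M : ℕ) : Matrix (Fin M) (Fin M) ℂ :=
  fun i j => (if (i : ℕ) = (j : ℕ) + 1 ∨ (j : ℕ) = (i : ℕ) + 1 then 1 else 0) +
    (if i = j then ((V i : ℝ) : ℂ) else 0)

/-
Writing `Φ_{[a,b)}` for the product of the one-step matrices with indices in `[a, b)`, the product
rule gives `Φ_q' = ∑_{j<q} Φ_{[j+1,q)} A' Φ_j`, so `|Δ_q'| ≤ 2 ∑_j ‖Φ_{[j+1,q)}‖ ‖Φ_j‖`. All these
matrices lie in `SL(2, ℝ)`, so `log ‖Φ_{[s,s+n)}‖` is a nonnegative subadditive cocycle. Cutting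
`[0, j)` and `[j+1, q)` into blocks of length `m` and averaging over the `m` offsets of the blocks
bounds `m log (‖Φ_{[j+1,q)}‖ ‖Φ_j‖)` by the Birkhoff sum `∑_{s<q} log ‖Φ_m(T^s ω)‖` up to `O(m²)`.
By the maximal ergodic theorem this Birkhoff sum is eventually at most `q (∫ log ‖Φ_m‖ + m ε)`,
which is `≤ q m (γ(E) + 2ε)` once `m` is large. Since the potential is bounded, `E ↦ log ‖Φ_m(E)‖`
is Lipschitz uniformly in `ω`, so together with the continuity of `γ` the estimate at one energy
spreads to a neighbourhood, and compactness of `K` makes it uniform on `K`.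
-/

open scoped Matrix.Norms.L2Operator
open Finset

namespace Matrix

variable {m n 𝕜 : Type*} [RCLike 𝕜] [Fintype m] [Fintype n] [DecidableEq n]

lemma sum_norm_sq_col_le_l2_opNorm_sq (A : Matrix m n 𝕜) (j : n) :
    ∑ i, ‖A i j‖ ^ 2 ≤ ‖A‖ ^ 2 := by
  have h := A.l2_opNorm_mulVec (EuclideanSpace.single j 1)
  rw [PiLp.norm_single, norm_one, mul_one] at h
  simpa [EuclideanSpace.norm_sq_eq, mulVec_single] using pow_le_pow_left₀ (norm_nonneg _) h 2

lemma norm_entry_le_l2_opNorm (A : Matrix m n 𝕜) (i : m) (j : n) : ‖A i j‖ ≤ ‖A‖ :=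
  (sq_le_sq₀ (norm_nonneg _) (norm_nonneg _)).mp <|
    (single_le_sum (fun i _ => by positivity) (mem_univ i)).trans
      (sum_norm_sq_col_le_l2_opNorm_sq A j)

end Matrix

lemma abs_trace_le_two_mul_norm (M : Matrix (Fin 2) (Fin 2) ℝ) : |M.trace| ≤ 2 * ‖M‖ := by
  have h₀ := M.norm_entry_le_l2_opNorm 0 0
  have h₁ := M.norm_entry_le_l2_opNorm 1 1
  rw [Real.norm_eq_abs] at h₀ h₁
  rw [Matrix.trace_fin_two]
  linarith [abs_add_le (M 0 0) (M 1 1)]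

lemma one_le_norm_of_det_eq_one {M : Matrix (Fin 2) (Fin 2) ℝ} (h : M.det = 1) : 1 ≤ ‖M‖ := by
  have h₀ := M.sum_norm_sq_col_le_l2_opNorm_sq 0
  have h₁ := M.sum_norm_sq_col_le_l2_opNorm_sq 1
  simp only [Fin.sum_univ_two, Real.norm_eq_abs, sq_abs] at h₀ h₁
  rw [Matrix.det_fin_two] at h
  -- Lagrange's identity: `(a² + c²)(b² + d²) = (ab + cd)² + (ad - bc)²`
  have hM : 1 ≤ ‖M‖ ^ 4 := by
    nlinarith [sq_nonneg (M 0 0 * M 0 1 + M 1 0 * M 1 1),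
      mul_le_mul h₀ h₁ (by positivity) (by positivity)]
  exact (one_le_pow_iff_of_nonneg (norm_nonneg M) four_ne_zero).mp hM

lemma log_norm_mul_le_of_det_eq_one {M N : Matrix (Fin 2) (Fin 2) ℝ} (hM : M.det = 1)
    (hN : N.det = 1) : Real.log ‖M * N‖ ≤ Real.log ‖M‖ + Real.log ‖N‖ := by
  have hMN : (M * N).det = 1 := by rw [Matrix.det_mul, hM, hN, one_mul]
  rw [← Real.log_mul (zero_lt_one.trans_le (one_le_norm_of_det_eq_one hM)).ne'
    (zero_lt_one.trans_le (one_le_norm_of_det_eq_one hN)).ne']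
  exact Real.log_le_log (zero_lt_one.trans_le (one_le_norm_of_det_eq_one hMN)) (norm_mul_le M N)

lemma Real.log_le_log_add_of_le_add {x y d : ℝ} (hx : 0 < x) (hy : 1 ≤ y) (hd : 0 ≤ d)
    (hxy : x ≤ y + d) : Real.log x ≤ Real.log y + d := by
  have hy0 : 0 < y := zero_lt_one.trans_le hy
  have h := Real.log_le_sub_one_of_pos (div_pos hx hy0)
  rw [Real.log_div hx.ne' hy0.ne', div_sub_one hy0.ne'] at h
  have : (x - y) / y ≤ d := by
    rw [div_le_iff₀ hy0]
    nlinarith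
  linarith

lemma eventually_mul_le_exp_mul (c : ℝ) {ε : ℝ} (hε : 0 < ε) :
    ∀ᶠ q : ℕ in atTop, c * q ≤ Real.exp (ε * q) := by
  obtain ⟨N, hN⟩ := exists_nat_ge (2 * c / ε ^ 2)
  filter_upwards [eventually_ge_atTop N] with q hq
  have hq : 2 * c / ε ^ 2 ≤ q := hN.trans (Nat.cast_le.mpr hq)
  rw [div_le_iff₀ (by positivity)] at hq
  have := Real.quadratic_le_exp_of_nonneg (mul_nonneg hε.le (Nat.cast_nonneg q))
  nlinarith [Nat.cast_nonneg (α := ℝ) q]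

lemma sum_range_add_sum_range_le {h : ℕ → ℝ} (h0 : ∀ s, 0 ≤ h s) {j q : ℕ} (hj : j < q) :
    ∑ s ∈ range j, h s + ∑ s ∈ range (q - (j + 1)), h (j + 1 + s) ≤ ∑ s ∈ range q, h s := by
  obtain ⟨r, rfl⟩ := Nat.exists_eq_add_of_lt hj
  rw [show j + r + 1 - (j + 1) = r by omega, show j + r + 1 = j + 1 + r by omega, sum_range_add,
    sum_range_succ]
  linarith [h0 j]

lemma sum_range_sum_range_add_mul (h : ℕ → ℝ) (m k : ℕ) :
    ∑ t ∈ range m, ∑ i ∈ range k, h (t + i * m) = ∑ s ∈ range (k * m), h s := by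
  rw [sum_comm]
  induction k with
  | zero => simp
  | succ k ih => simp_rw [sum_range_succ, ih, add_mul, one_mul, sum_range_add, add_comm]

section Subadditive

variable {a : ℕ → ℕ → ℝ} {C : ℝ}

lemma le_sum_blocks (hC : ∀ s n, a s n ≤ n * C)
    (hsub : ∀ s n k, a s (n + k) ≤ a s n + a (s + n) k) (s m k : ℕ) :
    a s (k * m) ≤ ∑ i ∈ range k, a (s + i * m) m := by
  induction k with
  | zero => simpa using hC s 0
  | succ k ih =>
    rw [add_mul, one_mul, sum_range_succ]
    linarith [hsub s (k * m) m]

lemma le_sum_blocks_add (hC : ∀ s n, a s n ≤ n * C)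
    (hsub : ∀ s n k, a s (n + k) ≤ a s n + a (s + n) k) (b m t k r : ℕ) :
    a b (t + k * m + r) ≤ ∑ i ∈ range k, a (b + (t + i * m)) m + (t + r) * C := by
  have hblocks := le_sum_blocks hC hsub (b + t) m k
  simp_rw [add_assoc b t] at hblocks
  linarith [hsub b t (k * m), hsub b (t + k * m) r, hC b t, hC (b + (t + k * m)) r]

/-- Averaging the block decomposition over the `m` offsets of the blocks turns the block sums
into the full sum `∑ s < n, a (b + s) m`. -/
lemma mul_le_sum_add_of_subadditive (h0 : ∀ s n, 0 ≤ a s n) (hC : ∀ s n, a s n ≤ n * C)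
    (hsub : ∀ s n k, a s (n + k) ≤ a s n + a (s + n) k) (b m n : ℕ) :
    m * a b n ≤ ∑ s ∈ range n, a (b + s) m + 2 * m ^ 2 * C := by
  have hC0 : 0 ≤ C := by simpa using (h0 0 1).trans (hC 0 1)
  have hsum0 : 0 ≤ ∑ s ∈ range n, a (b + s) m := sum_nonneg fun s _ => h0 _ _
  rcases m.eq_zero_or_pos with rfl | hm0
  · simpa using hsum0
  rcases lt_or_ge n m with hnm | hmn
  · have hnm : (n : ℝ) ≤ m := by exact_mod_cast hnm.le
    nlinarith [mul_le_mul_of_nonneg_left (hC b n) (Nat.cast_nonneg m),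
      mul_le_mul_of_nonneg_right hnm hC0]
  obtain ⟨k, hk, hk'⟩ : ∃ k, k * m + m ≤ n ∧ n < k * m + 2 * m := by
    obtain ⟨k, hq⟩ : ∃ k, n / m = k + 1 := ⟨n / m - 1, by have := Nat.div_pos hmn hm0; omega⟩
    have h₁ := Nat.div_mul_le_self n m
    have h₂ := Nat.lt_div_mul_add (a := n) hm0
    rw [hq, add_one_mul] at h₁ h₂
    exact ⟨k, h₁, by omega⟩
  have hoffset : ∀ t ∈ range m, a b n ≤ ∑ i ∈ range k, a (b + (t + i * m)) m + 2 * m * C := by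
    intro t ht
    have ht : t < m := mem_range.mp ht
    have hn : n = t + k * m + (n - t - k * m) := by omega
    have hrt : ((t + (n - t - k * m) : ℕ) : ℝ) ≤ 2 * m := by exact_mod_cast (by omega)
    have := le_sum_blocks_add hC hsub b m t k (n - t - k * m)
    rw [← hn] at this
    push_cast at hrt
    nlinarith
  calc (m : ℝ) * a b n = ∑ _t ∈ range m, a b n := by simp
    _ ≤ ∑ t ∈ range m, (∑ i ∈ range k, a (b + (t + i * m)) m + 2 * m * C) := sum_le_sum hoffset
    _ = ∑ s ∈ range (k * m), a (b + s) m + 2 * m ^ 2 * C := by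
      rw [sum_add_distrib, sum_range_sum_range_add_mul (fun s => a (b + s) m)]
      rw [sum_const, card_range, nsmul_eq_mul]
      ring
    _ ≤ ∑ s ∈ range n, a (b + s) m + 2 * m ^ 2 * C := by
      gcongr
      · exact fun s _ _ => h0 _ _
      · omega

end Subadditive

def dAstep : Matrix (Fin 2) (Fin 2) ℝ := !![1, 0; 0, 0]

lemma Astep_eq_smul_add (t : ℝ) : Astep t = t • dAstep + Astep 0 := by
  ext i j
  fin_cases i <;> fin_cases j <;> simp [Astep, dAstep]

lemma Astep_sub_Astep (s t : ℝ) : Astep s - Astep t = (s - t) • dAstep := by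
  rw [Astep_eq_smul_add s, Astep_eq_smul_add t, sub_smul]
  abel

lemma hasDerivAt_Astep (t : ℝ) : HasDerivAt Astep dAstep t := by
  have h := ((hasDerivAt_id t).smul_const dAstep).add_const (Astep 0)
  rw [one_smul] at h
  exact (funext Astep_eq_smul_add).symm ▸ h

lemma norm_dAstep_le : ‖dAstep‖ ≤ 1 := by
  have h : dAstep = Matrix.diagonal ![1, 0] := by
    ext i j
    fin_cases i <;> fin_cases j <;> rfl
  rw [h, Matrix.l2_opNorm_diagonal, pi_norm_le_iff_of_nonneg zero_le_one]
  intro i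
  fin_cases i <;> simp

lemma continuous_Astep : Continuous Astep := by
  unfold Astep
  fun_prop

lemma det_Astep (t : ℝ) : (Astep t).det = 1 := by
  simp [Astep, Matrix.det_fin_two_of]

lemma exists_norm_Astep_sub_le {S : Set ℝ} (hS : Bornology.IsBounded S) (C : ℝ) :
    ∃ R ≥ 1, ∀ E ∈ S, ∀ v, |v| ≤ C → ‖Astep (E - v)‖ ≤ R := by
  obtain ⟨B, hB⟩ := hS.exists_norm_le
  obtain ⟨R, hR⟩ := (isCompact_closedBall (0 : ℝ) (B + C)).exists_bound_of_continuousOn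
    continuous_Astep.continuousOn
  refine ⟨max R 1, le_max_right R 1, fun E hE v hv => (hR _ ?_).trans (le_max_left R 1)⟩
  have hE := hB E hE
  rw [Real.norm_eq_abs] at hE
  rw [mem_closedBall_zero_iff, Real.norm_eq_abs]
  linarith [abs_sub E v]

section Transfer

variable (V : ℕ → ℝ) (E : ℝ)

lemma det_transfer (n : ℕ) : (transfer V n E).det = 1 := by
  induction n with
  | zero => simp [transfer]
  | succ n ih => rw [transfer, Matrix.det_mul, det_Astep, ih, one_mul]

lemma one_le_norm_transfer (n : ℕ) : 1 ≤ ‖transfer V n E‖ :=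
  one_le_norm_of_det_eq_one (det_transfer V E n)

lemma transfer_add (a b : ℕ) :
    transfer V (a + b) E = transfer (fun k => V (k + a)) b E * transfer V a E := by
  induction b with
  | zero => simp [transfer]
  | succ b ih => rw [← add_assoc, transfer, ih, transfer, mul_assoc, add_comm a b]

lemma log_norm_transfer_add_le (s n k : ℕ) :
    Real.log ‖transfer (fun i => V (i + s)) (n + k) E‖ ≤
      Real.log ‖transfer (fun i => V (i + s)) n E‖ +
        Real.log ‖transfer (fun i => V (i + (s + n))) k E‖ := by
  have hshift : (fun i => V (i + (s + n))) = fun i => V (i + n + s) := by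
    funext i
    rw [add_right_comm, add_assoc]
  rw [transfer_add, add_comm (Real.log _), hshift]
  exact log_norm_mul_le_of_det_eq_one (det_transfer _ _ _) (det_transfer _ _ _)

lemma continuous_transfer (n : ℕ) : Continuous fun V : ℕ → ℝ => transfer V n E := by
  induction n with
  | zero => exact continuous_const
  | succ n ih => exact (continuous_Astep.comp (continuous_const.sub (continuous_apply n))).mul ih

variable {V E} {R : ℝ}

lemma norm_transfer_le_pow (hR : ∀ k, ‖Astep (E - V k)‖ ≤ R) (n : ℕ) :
    ‖transfer V n E‖ ≤ R ^ n := by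
  induction n with
  | zero => simp [transfer]
  | succ n ih =>
    rw [transfer, pow_succ']
    exact (norm_mul_le _ _).trans <|
      mul_le_mul (hR n) ih (norm_nonneg _) ((norm_nonneg _).trans (hR 0))

lemma log_norm_transfer_le (hR : ∀ k, ‖Astep (E - V k)‖ ≤ R) (n : ℕ) :
    Real.log ‖transfer V n E‖ ≤ n * Real.log R := by
  rw [← Real.log_pow]
  exact Real.log_le_log (zero_lt_one.trans_le (one_le_norm_transfer V E n))
    (norm_transfer_le_pow hR n)

lemma norm_transfer_sub_le {E' : ℝ} (hR : ∀ k, ‖Astep (E - V k)‖ ≤ R)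
    (hR' : ∀ k, ‖Astep (E' - V k)‖ ≤ R) (n : ℕ) :
    ‖transfer V n E - transfer V n E'‖ ≤ n * R ^ n * |E - E'| := by
  have hR1 : 1 ≤ R := (one_le_norm_of_det_eq_one (det_Astep _)).trans (hR 0)
  have hA : ∀ k, ‖Astep (E - V k) - Astep (E' - V k)‖ ≤ |E - E'| := fun k => by
    rw [Astep_sub_Astep, sub_sub_sub_cancel_right, norm_smul, Real.norm_eq_abs]
    exact mul_le_of_le_one_right (abs_nonneg _) norm_dAstep_le
  induction n with
  | zero => simp [transfer]
  | succ n ih =>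
    have hsplit : transfer V (n + 1) E - transfer V (n + 1) E' =
        (Astep (E - V n) - Astep (E' - V n)) * transfer V n E +
          Astep (E' - V n) * (transfer V n E - transfer V n E') := by
      simp only [transfer, sub_mul, mul_sub]
      abel
    calc ‖transfer V (n + 1) E - transfer V (n + 1) E'‖
        ≤ |E - E'| * R ^ n + R * (n * R ^ n * |E - E'|) := by
          rw [hsplit]
          refine (norm_add_le _ _).trans (add_le_add ?_ ?_) <;> refine (norm_mul_le _ _).trans ?_
          · exact mul_le_mul (hA n) (norm_transfer_le_pow hR n) (norm_nonneg _) (abs_nonneg _)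
          · exact mul_le_mul (hR' n) ih (norm_nonneg _) (by linarith)
      _ ≤ (n + 1 : ℕ) * R ^ (n + 1) * |E - E'| := by
          rw [pow_succ', Nat.cast_succ]
          have := mul_nonneg (pow_nonneg (zero_le_one.trans hR1) n) (abs_nonneg (E - E'))
          nlinarith

lemma log_norm_transfer_le_add {E' : ℝ} (hR : ∀ k, ‖Astep (E - V k)‖ ≤ R)
    (hR' : ∀ k, ‖Astep (E' - V k)‖ ≤ R) (n : ℕ) :
    Real.log ‖transfer V n E‖ ≤ Real.log ‖transfer V n E'‖ + n * R ^ n * |E - E'| := by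
  have hR1 : 1 ≤ R := (one_le_norm_of_det_eq_one (det_Astep _)).trans (hR 0)
  refine Real.log_le_log_add_of_le_add (zero_lt_one.trans_le (one_le_norm_transfer V E n))
    (one_le_norm_transfer V E' n) (by positivity) ?_
  linarith [norm_sub_norm_le (transfer V n E) (transfer V n E'), norm_transfer_sub_le hR hR' n]

end Transfer

section Deriv

variable (V : ℕ → ℝ)

def transferDeriv (n : ℕ) (E : ℝ) : Matrix (Fin 2) (Fin 2) ℝ :=
  ∑ j ∈ range n, transfer (fun k => V (k + (j + 1))) (n - (j + 1)) E * (dAstep * transfer V j E)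

lemma transferDeriv_succ (n : ℕ) (E : ℝ) : transferDeriv V (n + 1) E =
    dAstep * transfer V n E + Astep (E - V n) * transferDeriv V n E := by
  rw [transferDeriv, sum_range_succ, Nat.sub_self, transferDeriv, mul_sum, add_comm]
  simp only [transfer, one_mul]
  congr 1
  refine sum_congr rfl fun j hj => ?_
  have hj : j + 1 ≤ n := mem_range.mp hj
  rw [Nat.sub_add_comm hj, transfer, Nat.sub_add_cancel hj, mul_assoc]

lemma hasDerivAt_transfer (n : ℕ) (E : ℝ) :
    HasDerivAt (transfer V n) (transferDeriv V n E) E := by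
  induction n with
  | zero => exact hasDerivAt_const E (1 : Matrix (Fin 2) (Fin 2) ℝ)
  | succ n ih =>
    rw [transferDeriv_succ]
    exact ((hasDerivAt_Astep _).comp_sub_const E (V n)).mul ih

lemma deriv_disc (q : ℕ) (E : ℝ) : deriv (disc V q) E = (transferDeriv V q E).trace :=
  ((Matrix.traceLinearMap (Fin 2) ℝ ℝ).toContinuousLinearMap.hasFDerivAt.comp_hasDerivAt E
    (hasDerivAt_transfer V q E)).deriv

lemma norm_transferDeriv_le (n : ℕ) (E : ℝ) : ‖transferDeriv V n E‖ ≤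
    ∑ j ∈ range n, ‖transfer (fun k => V (k + (j + 1))) (n - (j + 1)) E‖ * ‖transfer V j E‖ := by
  refine (norm_sum_le _ _).trans (sum_le_sum fun j _ => ?_)
  refine (norm_mul_le _ _).trans (mul_le_mul_of_nonneg_left ?_ (norm_nonneg _))
  exact (norm_mul_le _ _).trans (mul_le_of_le_one_left (norm_nonneg _) norm_dAstep_le)

variable {V} {E R : ℝ}

lemma abs_deriv_disc_le (hR : ∀ k, ‖Astep (E - V k)‖ ≤ R) {m : ℕ} (hm : 0 < m) (q : ℕ) :
    |deriv (disc V q) E| ≤ 2 * q * Real.exp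
      ((∑ s ∈ range q, Real.log ‖transfer (fun k => V (k + s)) m E‖) / m +
        4 * m * Real.log R) := by
  set a : ℕ → ℕ → ℝ := fun s n => Real.log ‖transfer (fun k => V (k + s)) n E‖
  have h0 : ∀ s n, 0 ≤ a s n := fun s n => Real.log_nonneg (one_le_norm_transfer _ E n)
  have hC : ∀ s n, a s n ≤ n * Real.log R := fun s n => log_norm_transfer_le (fun k => hR _) n
  have hsub : ∀ s n k, a s (n + k) ≤ a s n + a (s + n) k := log_norm_transfer_add_le V E
  have hm' : (0 : ℝ) < m := Nat.cast_pos.mpr hm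
  have hterm : ∀ j ∈ range q,
      ‖transfer (fun k => V (k + (j + 1))) (q - (j + 1)) E‖ * ‖transfer V j E‖ ≤
        Real.exp ((∑ s ∈ range q, a s m) / m + 4 * m * Real.log R) := by
    intro j hj
    have hfst := mul_le_sum_add_of_subadditive h0 hC hsub 0 m j
    have hsnd := mul_le_sum_add_of_subadditive h0 hC hsub (j + 1) m (q - (j + 1))
    have hsplit :=
      sum_range_add_sum_range_le (h := fun s => a s m) (fun s => h0 s m) (mem_range.mp hj)
    simp only [zero_add] at hfst
    have hlog : a (j + 1) (q - (j + 1)) + a 0 j ≤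
        (∑ s ∈ range q, a s m) / m + 4 * m * Real.log R := by
      rw [div_add' _ _ _ hm'.ne', le_div_iff₀ hm']
      nlinarith
    calc ‖transfer (fun k => V (k + (j + 1))) (q - (j + 1)) E‖ * ‖transfer V j E‖
        = Real.exp (a (j + 1) (q - (j + 1)) + a 0 j) := by
          simp only [a, add_zero, Real.exp_add]
          rw [Real.exp_log (zero_lt_one.trans_le (one_le_norm_transfer _ E _)),
            Real.exp_log (zero_lt_one.trans_le (one_le_norm_transfer V E j))]
      _ ≤ _ := Real.exp_le_exp.mpr hlog
  rw [deriv_disc]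
  calc |(transferDeriv V q E).trace|
      ≤ 2 * ‖transferDeriv V q E‖ := abs_trace_le_two_mul_norm _
    _ ≤ 2 * ∑ j ∈ range q, Real.exp ((∑ s ∈ range q, a s m) / m + 4 * m * Real.log R) := by
      gcongr
      exact (norm_transferDeriv_le V q E).trans (sum_le_sum hterm)
    _ = _ := by
      rw [sum_const, card_range, nsmul_eq_mul]
      ring

end Deriv

section Birkhoff

variable {α : Type*} {T : α → α} {g : α → ℝ}

def birkhoffMax (T : α → α) (g : α → ℝ) (N : ℕ) : α → ℝ :=
  (range (N + 1)).sup' nonempty_range_add_one (birkhoffSum T g)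

lemma birkhoffSum_le_birkhoffMax {n N : ℕ} (hn : n ≤ N) (x : α) :
    birkhoffSum T g n x ≤ birkhoffMax T g N x := by
  rw [birkhoffMax, Finset.sup'_apply]
  exact le_sup' (fun n => birkhoffSum T g n x) (mem_range.mpr (Nat.lt_succ_of_le hn))

lemma birkhoffMax_nonneg (N : ℕ) (x : α) : 0 ≤ birkhoffMax T g N x := by
  simpa using birkhoffSum_le_birkhoffMax (T := T) (g := g) N.zero_le x

lemma birkhoffMax_mono (T : α → α) (g : α → ℝ) : Monotone (birkhoffMax T g) :=
  fun _ _ hN => sup'_mono _ (range_subset_range.mpr (Nat.succ_le_succ hN)) _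

lemma birkhoffMax_le_add_birkhoffMax_apply {N : ℕ} {x : α} (hx : 0 < birkhoffMax T g N x) :
    birkhoffMax T g N x ≤ g x + birkhoffMax T g N (T x) := by
  obtain ⟨n, hn, hmax⟩ :=
    exists_mem_eq_sup' (nonempty_range_add_one (n := N)) fun n => birkhoffSum T g n x
  have hM : birkhoffMax T g N x = birkhoffSum T g n x := by
    rw [birkhoffMax, Finset.sup'_apply, hmax]
  rw [hM] at hx ⊢
  obtain _ | k := n
  · simp at hx
  · have hk : k ≤ N := by
      rw [mem_range] at hn
      omega
    rw [birkhoffSum_succ']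
    linarith [birkhoffSum_le_birkhoffMax (T := T) (g := g) hk (T x)]

lemma preimage_setOf_unbounded_birkhoffSum (g : α → ℝ) :
    T ⁻¹' {x | ∀ K : ℕ, ∃ n, K < birkhoffSum T g n x} =
      {x | ∀ K : ℕ, ∃ n, K < birkhoffSum T g n x} := by
  ext x
  simp only [Set.mem_preimage, Set.mem_ofPred_eq]
  constructor
  · intro h K
    obtain ⟨K', hK'⟩ := exists_nat_ge (K + |g x|)
    obtain ⟨n, hn⟩ := h K'
    refine ⟨n + 1, ?_⟩
    rw [birkhoffSum_succ']
    linarith [neg_abs_le (g x)]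
  · intro h K
    obtain ⟨K', hK'⟩ := exists_nat_ge (K + |g x|)
    obtain ⟨n, hn⟩ := h K'
    obtain _ | n := n
    · exact absurd hn (Nat.cast_nonneg K').not_gt
    · refine ⟨n, ?_⟩
      rw [birkhoffSum_succ'] at hn
      linarith [le_abs_self (g x)]

variable [MeasurableSpace α] {μ : Measure α}

lemma measurable_birkhoffSum (hT : Measurable T) (hg : Measurable g) (n : ℕ) :
    Measurable (birkhoffSum T g n) :=
  Finset.measurable_sum _ fun k _ => hg.comp (hT.iterate k)

lemma integrable_birkhoffSum (hT : MeasurePreserving T μ μ) (hg : Integrable g μ) (n : ℕ) :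
    Integrable (birkhoffSum T g n) μ :=
  integrable_finsetSum _ fun k _ => (hT.iterate k).integrable_comp_of_integrable hg

/-- Garsia's maximal ergodic theorem. -/
theorem setIntegral_pos_birkhoffMax_nonneg (hT : MeasurePreserving T μ μ) (hgm : Measurable g)
    (hg : Integrable g μ) (N : ℕ) : 0 ≤ ∫ x in {x | 0 < birkhoffMax T g N x}, g x ∂μ := by
  set M := birkhoffMax T g N
  set A := {x | 0 < M x}
  have hMm : Measurable M :=
    Finset.measurable_range_sup' fun n _ => measurable_birkhoffSum hT.measurable hgm n
  have hMi : Integrable M μ := Finset.sup'_induction (p := fun F => Integrable F μ) _ _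
    (fun _ h₁ _ h₂ => h₁.sup h₂) fun n _ => integrable_birkhoffSum hT hg n
  have hMTi : Integrable (M ∘ T) μ := hT.integrable_comp_of_integrable hMi
  have hA : MeasurableSet A := measurableSet_lt measurable_const hMm
  have hM : ∫ x in A, M x ∂μ = ∫ x, M x ∂μ :=
    setIntegral_eq_integral_of_forall_compl_eq_zero fun x hx =>
      le_antisymm (not_lt.mp hx) (birkhoffMax_nonneg N x)
  have hMT : ∫ x in A, M (T x) ∂μ ≤ ∫ x, M x ∂μ := by
    calc ∫ x in A, M (T x) ∂μ ≤ ∫ x, M (T x) ∂μ :=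
          setIntegral_le_integral hMTi (ae_of_all _ fun x => birkhoffMax_nonneg N (T x))
      _ = ∫ x, M x ∂μ := by
          rw [← integral_map hT.aemeasurable hMm.aestronglyMeasurable, hT.map_eq]
  calc (0 : ℝ) ≤ ∫ x in A, M x ∂μ - ∫ x in A, M (T x) ∂μ := by linarith
    _ = ∫ x in A, (M x - M (T x)) ∂μ := (integral_sub hMi.integrableOn hMTi.integrableOn).symm
    _ ≤ ∫ x in A, g x ∂μ := setIntegral_mono_on (hMi.sub hMTi).integrableOn hg.integrableOn hA
          fun x hx => by linarith [birkhoffMax_le_add_birkhoffMax_apply hx]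

/-- The upper half of Birkhoff's pointwise ergodic theorem. -/
theorem ae_eventually_birkhoffSum_le [IsProbabilityMeasure μ] (hT : Ergodic T μ)
    (hgm : Measurable g) (hg : Integrable g μ) {c : ℝ} (hc : ∫ x, g x ∂μ < c) :
    ∀ᵐ x ∂μ, ∀ᶠ n : ℕ in atTop, birkhoffSum T g n x ≤ c * n := by
  obtain ⟨d, hgd, hdc⟩ := exists_between hc
  set g' : α → ℝ := fun x => g x - d
  have hS : ∀ n x, birkhoffSum T g' n x = birkhoffSum T g n x - n * d := fun n x => by
    simp [g', birkhoffSum, sum_sub_distrib]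
  have hg'm : Measurable g' := hgm.sub measurable_const
  have hg'i : Integrable g' μ := hg.sub (integrable_const d)
  have hg' : ∫ x, g' x ∂μ < 0 := by
    rw [integral_sub hg (integrable_const d)]
    simpa using hgd
  set B := {x | ∀ K : ℕ, ∃ n, K < birkhoffSum T g' n x}
  have hB : MeasurableSet B := by
    simp only [B, Set.ofPred_forall, Set.ofPred_exists]
    exact .iInter fun K => .iUnion fun n =>
      measurableSet_lt measurable_const (measurable_birkhoffSum hT.measurable hg'm n)
  rcases hT.measure_self_or_compl_eq_zero hB (preimage_setOf_unbounded_birkhoffSum g') with h | h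
  · filter_upwards [measure_eq_zero_iff_ae_notMem.mp h] with x hx
    simp only [B, Set.mem_ofPred_eq, not_forall, not_exists, not_lt] at hx
    obtain ⟨K, hK⟩ := hx
    obtain ⟨n₀, hn₀⟩ := exists_nat_ge (K / (c - d))
    filter_upwards [eventually_ge_atTop n₀] with n hn
    have hn : (K : ℝ) ≤ (c - d) * n := by
      rw [div_le_iff₀ (sub_pos.mpr hdc)] at hn₀
      nlinarith [(Nat.cast_le (α := ℝ)).mpr hn]
    linarith [hS n x, hK n]
  · -- `B` is conull: the sets `{0 < birkhoffMax T g' N}` then exhaust `α` up to a null set,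
    -- and the maximal ergodic theorem gives `0 ≤ ∫ g'`.
    exfalso
    set A : ℕ → Set α := fun N => {x | 0 < birkhoffMax T g' N x}
    have hA : ∀ N, MeasurableSet (A N) := fun N => measurableSet_lt measurable_const
      (Finset.measurable_range_sup' fun n _ => measurable_birkhoffSum hT.measurable hg'm n)
    have hAmono : Monotone A := fun N N' hN x hx =>
      lt_of_lt_of_le hx (birkhoffMax_mono T g' hN x)
    have hBA : B ⊆ ⋃ N, A N := fun x hx => by
      obtain ⟨n, hn⟩ := hx 0
      exact Set.mem_iUnion.mpr
        ⟨n, lt_of_lt_of_le (by exact_mod_cast hn) (birkhoffSum_le_birkhoffMax le_rfl x)⟩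
    have hAuniv : (⋃ N, A N) =ᵐ[μ] (Set.univ : Set α) :=
      ae_eq_univ.mpr (measure_mono_null (Set.compl_subset_compl.mpr hBA) h)
    have hlim := tendsto_setIntegral_of_monotone hA hAmono hg'i.integrableOn
    rw [setIntegral_congr_set hAuniv, setIntegral_univ] at hlim
    have := ge_of_tendsto' hlim fun N =>
      setIntegral_pos_birkhoffMax_nonneg hT.toMeasurePreserving hg'm hg'i N
    linarith

end Birkhoff

section Ergodic

variable {Ω : Type*} {T : Ω → Ω} {f : Ω → ℝ}

lemma birkhoffSum_log_norm_transfer (n : ℕ) (E : ℝ) (q : ℕ) (ω : Ω) :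
    birkhoffSum T (fun ω => Real.log ‖transfer (fun k => f (T^[k] ω)) n E‖) q ω =
      ∑ s ∈ range q, Real.log ‖transfer (fun k => f (T^[k + s] ω)) n E‖ := by
  simp only [birkhoffSum, Function.iterate_add_apply]

variable [MeasurableSpace Ω] {ℙ : Measure Ω} [IsProbabilityMeasure ℙ] {C : ℝ} {γ : ℝ → ℝ}

-- `‖·‖` is the `L2Operator` norm, which is definitionally `opNorm2`.
def IsLyapunovExponent (ℙ : Measure Ω) (T : Ω → Ω) (f : Ω → ℝ) (γ : ℝ → ℝ) : Prop :=
  ∀ E : ℝ, Tendsto (fun q : ℕ => (q : ℝ)⁻¹ *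
    ∫ ω, Real.log ‖transfer (fun k => f (T^[k] ω)) q E‖ ∂ℙ) atTop (𝓝 (γ E))

lemma measurable_log_norm_transfer (hT : Measurable T) (hf : Measurable f) (n : ℕ) (E : ℝ) :
    Measurable fun ω => Real.log ‖transfer (fun k => f (T^[k] ω)) n E‖ :=
  Real.measurable_log.comp <| (continuous_norm.comp (continuous_transfer E n)).measurable.comp <|
    measurable_pi_lambda _ fun k => hf.comp (hT.iterate k)

lemma exists_ball_ae_eventually_sum_log_norm_transfer_le (hErg : Ergodic T ℙ)
    (hfm : Measurable f) (hC : ∀ ω, |f ω| ≤ C) (hγc : Continuous γ)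
    (hγ : IsLyapunovExponent ℙ T f γ) (E₀ : ℝ) {ε : ℝ} (hε : 0 < ε) :
    ∃ m > 0, ∃ r > 0, ∀ᵐ ω ∂ℙ, ∀ᶠ q : ℕ in atTop, ∀ E ∈ Metric.ball E₀ r,
      ∑ s ∈ range q, Real.log ‖transfer (fun k => f (T^[k + s] ω)) m E‖ ≤ m * (γ E + ε) * q := by
  obtain ⟨R, hR1, hR⟩ := exists_norm_Astep_sub_le (Metric.isBounded_ball (x := E₀) (r := 1)) C
  obtain ⟨m, hmγ, hm⟩ := ((hγ E₀).eventually (gt_mem_nhds (lt_add_of_pos_right (γ E₀)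
    (by positivity : 0 < ε / 3)))).and (eventually_gt_atTop 0) |>.exists
  obtain ⟨δ, hδ, hγδ⟩ := Metric.continuous_iff.mp hγc E₀ (ε / 3) (by positivity)
  have hRm : 0 < R ^ m := by positivity
  have hm' : (0 : ℝ) < m := Nat.cast_pos.mpr hm
  refine ⟨m, hm, min 1 (min δ (ε / 3 / R ^ m)), by positivity, ?_⟩
  set g := fun ω => Real.log ‖transfer (fun k => f (T^[k] ω)) m E₀‖
  have hgm : Measurable g := measurable_log_norm_transfer hErg.measurable hfm m E₀
  have hgi : Integrable g ℙ := by
    refine Integrable.of_bound hgm.aestronglyMeasurable (m * Real.log R) (ae_of_all _ fun ω => ?_)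
    rw [Real.norm_of_nonneg (Real.log_nonneg (one_le_norm_transfer _ _ _))]
    exact log_norm_transfer_le (fun k => hR E₀ (Metric.mem_ball_self one_pos) _ (hC _)) m
  have hgc : ∫ ω, g ω ∂ℙ < m * (γ E₀ + ε / 3) := by
    rwa [inv_mul_lt_iff₀ hm'] at hmγ
  filter_upwards [ae_eventually_birkhoffSum_le hErg hgm hgi hgc] with ω hω
  filter_upwards [hω] with q hq E hE
  rw [birkhoffSum_log_norm_transfer] at hq
  have hdist : |E - E₀| < min 1 (min δ (ε / 3 / R ^ m)) := by rwa [← Real.dist_eq]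
  have hγE : γ E₀ < γ E + ε / 3 := by
    have := hγδ E (lt_of_lt_of_le hdist (by simp))
    rw [Real.dist_eq, abs_sub_lt_iff] at this
    linarith
  have hball : E ∈ Metric.ball E₀ 1 := by
    rw [Metric.mem_ball, Real.dist_eq]
    exact lt_of_lt_of_le hdist (min_le_left _ _)
  have hstep : R ^ m * |E - E₀| ≤ ε / 3 := by
    rw [← le_div_iff₀' hRm]
    exact hdist.le.trans ((min_le_right _ _).trans (min_le_right _ _))
  have hlip : ∀ s, Real.log ‖transfer (fun k => f (T^[k + s] ω)) m E‖ ≤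
      Real.log ‖transfer (fun k => f (T^[k + s] ω)) m E₀‖ + m * (ε / 3) := fun s => by
    have := log_norm_transfer_le_add (V := fun k => f (T^[k + s] ω))
      (fun k => hR E hball _ (hC _)) (fun k => hR E₀ (Metric.mem_ball_self one_pos) _ (hC _)) m
    nlinarith
  calc ∑ s ∈ range q, Real.log ‖transfer (fun k => f (T^[k + s] ω)) m E‖
      ≤ ∑ s ∈ range q, (Real.log ‖transfer (fun k => f (T^[k + s] ω)) m E₀‖ + m * (ε / 3)) :=
        sum_le_sum fun s _ => hlip s
    _ ≤ m * (γ E + ε) * q := by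
      rw [sum_add_distrib, sum_const, card_range, nsmul_eq_mul]
      nlinarith [mul_le_mul_of_nonneg_left hγE.le (mul_nonneg hm'.le (Nat.cast_nonneg (α := ℝ) q))]

lemma ae_eventually_sum_log_norm_transfer_le (hErg : Ergodic T ℙ) (hfm : Measurable f)
    (hC : ∀ ω, |f ω| ≤ C) (hγc : Continuous γ) (hγ : IsLyapunovExponent ℙ T f γ) {K : Set ℝ}
    (hK : IsCompact K) {ε : ℝ} (hε : 0 < ε) :
    ∀ᵐ ω ∂ℙ, ∃ M : ℕ, ∀ᶠ q : ℕ in atTop, ∀ E ∈ K, ∃ m, 0 < m ∧ m ≤ M ∧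
      ∑ s ∈ range q, Real.log ‖transfer (fun k => f (T^[k + s] ω)) m E‖ ≤ m * (γ E + ε) * q := by
  choose m hm r hr hae using fun E₀ =>
    exists_ball_ae_eventually_sum_log_norm_transfer_le hErg hfm hC hγc hγ E₀ hε
  obtain ⟨t, -, hKt⟩ := hK.elim_nhds_subcover (fun E₀ => Metric.ball E₀ (r E₀))
    fun E₀ _ => Metric.ball_mem_nhds E₀ (hr E₀)
  filter_upwards [(eventually_all_finset t).mpr fun E₀ _ => hae E₀] with ω hω
  refine ⟨t.sup m, ?_⟩
  filter_upwards [(eventually_all_finset t).mpr hω] with q hq E hE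
  obtain ⟨E₀, hE₀t, hE₀⟩ := Set.mem_iUnion₂.mp (hKt hE)
  exact ⟨m E₀, hm E₀, le_sup hE₀t, hq E₀ hE₀t E hE₀⟩

lemma ae_eventually_abs_deriv_disc_le (hErg : Ergodic T ℙ) (hfm : Measurable f)
    (hC : ∀ ω, |f ω| ≤ C) (hγc : Continuous γ) (hγ : IsLyapunovExponent ℙ T f γ) {K : Set ℝ}
    (hK : IsCompact K) {ε : ℝ} (hε : 0 < ε) :
    ∀ᵐ ω ∂ℙ, ∀ᶠ q : ℕ in atTop, ∀ E ∈ K,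
      |deriv (disc (fun k => f (T^[k] ω)) q) E| ≤ Real.exp ((γ E + ε) * q) := by
  obtain ⟨R, hR1, hR⟩ := exists_norm_Astep_sub_le hK.isBounded C
  have hlogR : 0 ≤ Real.log R := Real.log_nonneg hR1
  filter_upwards [ae_eventually_sum_log_norm_transfer_le hErg hfm hC hγc hγ hK (half_pos hε)]
    with ω ⟨M, hM⟩
  filter_upwards [hM, eventually_mul_le_exp_mul (2 * Real.exp (4 * M * Real.log R)) (half_pos hε)]
    with q hq hexp E hE
  obtain ⟨m, hm, hmM, hsum⟩ := hq E hE
  have hm' : (0 : ℝ) < m := Nat.cast_pos.mpr hm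
  calc |deriv (disc (fun k => f (T^[k] ω)) q) E|
      ≤ 2 * q * Real.exp ((∑ s ∈ range q, Real.log ‖transfer (fun k => f (T^[k + s] ω)) m E‖) / m +
          4 * m * Real.log R) := abs_deriv_disc_le (fun k => hR E hE _ (hC _)) hm q
    _ ≤ 2 * q * Real.exp ((γ E + ε / 2) * q + 4 * M * Real.log R) := by
      gcongr
      rw [div_le_iff₀ hm']
      linarith
    _ = 2 * Real.exp (4 * M * Real.log R) * q * Real.exp ((γ E + ε / 2) * q) := by
      rw [Real.exp_add]
      ring
    _ ≤ Real.exp (ε / 2 * q) * Real.exp ((γ E + ε / 2) * q) := by gcongr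
    _ = Real.exp ((γ E + ε) * q) := by
      rw [← Real.exp_add]
      ring_nf

end Ergodic

theorem disc_deriv_bound_ergodic_general
    {Ω : Type*} [MeasurableSpace Ω] (ℙ : Measure Ω) [IsProbabilityMeasure ℙ]
    (T : Ω → Ω) (hErg : Ergodic T ℙ)
    (f : Ω → ℝ) (hfm : Measurable f) (hfb : ∃ C, ∀ ω, |f ω| ≤ C)
    (γ : ℝ → ℝ) (hγc : Continuous γ)
    (hγ : ∀ E : ℝ, Tendsto
      (fun q : ℕ => (q : ℝ)⁻¹ *
        ∫ ω, Real.log (opNorm2 (transfer (fun k => f (T^[k] ω)) q E)) ∂ℙ)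
      atTop (𝓝 (γ E))) :
    ∀ᵐ ω ∂ℙ, ∀ ε > (0 : ℝ), ∃ q₀ : ℕ, ∀ q > q₀, ∀ E ∈ Kset f,
      |deriv (fun E' => disc (fun k => f (T^[k] ω)) q E') E| ≤
        Real.exp ((γ E + ε) * q) := by
  obtain ⟨C, hC⟩ := hfb
  have hK : IsCompact (Kset f) := isCompact_Icc
  have hbound : ∀ k : ℕ, ∀ᵐ ω ∂ℙ, ∀ᶠ q : ℕ in atTop, ∀ E ∈ Kset f,
      |deriv (disc (fun k => f (T^[k] ω)) q) E| ≤ Real.exp ((γ E + 1 / (k + 1)) * q) :=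
    fun k => ae_eventually_abs_deriv_disc_le hErg hfm hC hγc hγ hK Nat.one_div_pos_of_nat
  filter_upwards [ae_all_iff.mpr hbound] with ω hω ε hε
  obtain ⟨k, hk⟩ := exists_nat_one_div_lt hε
  obtain ⟨q₀, hq₀⟩ := eventually_atTop.mp (hω k)
  exact ⟨q₀, fun q hq E hE => (hq₀ q hq.le E hE).trans (Real.exp_le_exp.mpr (by gcongr))⟩

/-- Lemma 6, first part: almost surely the derivative of the
discriminant is bounded by `e^{(γ(E)+ε)q}` uniformly on `K`, for large `q`. -/
theorem disc_deriv_bound_ergodic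
    {Ω : Type*} [MeasurableSpace Ω] (ℙ : Measure Ω) [IsProbabilityMeasure ℙ]
    (T : Ω → Ω) (hTbij : Function.Bijective T) (hErg : Ergodic T ℙ)
    (f : Ω → ℝ) (hfm : Measurable f) (hfb : ∃ C, ∀ ω, |f ω| ≤ C)
    (γ : ℝ → ℝ) (hγc : Continuous γ)
    (hγ : ∀ E : ℝ, Tendsto
      (fun q : ℕ => (q : ℝ)⁻¹ *
        ∫ ω, Real.log (opNorm2 (transfer (fun k => f (T^[k] ω)) q E)) ∂ℙ)
      atTop (𝓝 (γ E))) :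
    ∀ᵐ ω ∂ℙ, ∀ ε > (0 : ℝ), ∃ q₀ : ℕ, ∀ q > q₀, ∀ E ∈ Kset f,
      |deriv (fun E' => disc (fun k => f (T^[k] ω)) q E') E| ≤
        Real.exp ((γ E + ε) * q) :=
  disc_deriv_bound_ergodic_general ℙ T hErg f hfm hfb γ hγc hγ
end
end

section
/- (Floquet characteristic polynomial identity.) Let q ≥ 1 and let V : ℤ_q → ℝ be any function. For every E ∈ ℝ and every κ ∈ ℝ, the characteristic polynomial of the Floquet operator H[κ] satisfies det(E·I − H[κ]) = Tr Φ_q(E) − 2·cos(qκ), where Φ_q(E) = A(E − V(q−1))⋯A(E − V(0)) is the q-step transfer matrix. In particular, det(E·I − H[κ]) is the sum of a polynomial in E independent of κ (the discriminant Δ_q(E) = Tr Φ_q(E)) and the constant −2cos(qκ). -/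
open MeasureTheory Filter Topology Matrix

noncomputable section

/-!
Conjugating `E - H[κ]` by the diagonal gauge `diag(e^{iκx})`, `x = 0, …, q - 1`, removes the
phase from every bond except the one closing the cycle, which picks up `z = e^{iqκ}` and `z⁻¹`.
What remains is the tridiagonal Dirichlet matrix `J` of `E - V` on `{0, …, q - 1}` with corner
entries `-z` and `-z⁻¹`. Expanding its determinant along the two corner rows gives
`det J - z - z⁻¹ - det J'`, where `J'` drops the first and the last site. Both Dirichlet
determinants obey the three-term recursion of the transfer matrices, and this identifies `det J`
and `-det J'` with the diagonal entries of `Φ_q(E)`.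
-/

section JacobiMatrix

variable {R : Type*} [CommRing R]

lemma det_updateRow_sub_smul_single {n : ℕ} (A : Matrix (Fin (n + 1)) (Fin (n + 1)) R)
    (i j : Fin (n + 1)) (a : R) :
    (A.updateRow i (A i - a • Pi.single j 1)).det =
      A.det - a * ((-1) ^ (i + j : ℕ) * (A.submatrix i.succAbove j.succAbove).det) := by
  rw [sub_eq_add_neg, ← neg_smul, det_updateRow_add, det_updateRow_smul, updateRow_eq_self,
    ← adjugate_apply, adjugate_fin_succ_eq_det_submatrix]
  ring

lemma det_diagonal_mul_mul_diagonal {n : Type*} [Fintype n] [DecidableEq n] {d d' : n → R}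
    (h : ∀ i, d i * d' i = 1) (A : Matrix n n R) :
    (diagonal d * A * diagonal d').det = A.det := by
  rw [det_mul, det_mul, det_diagonal, det_diagonal, mul_right_comm, ← Finset.prod_mul_distrib]
  simp [h]

def jacobi (b : ℕ → R) (n : ℕ) : Matrix (Fin n) (Fin n) R :=
  of fun i j => (if (i : ℕ) = j then b i else 0) - (if (j : ℕ) + 1 = i then 1 else 0) -
    (if (i : ℕ) + 1 = j then 1 else 0)

lemma jacobi_transpose (b : ℕ → R) (n : ℕ) : (jacobi b n)ᵀ = jacobi b n := by
  ext i j
  simp only [transpose_apply, jacobi, of_apply]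
  by_cases h : (i : ℕ) = j
  · simp [h]
  · rw [if_neg (Ne.symm h), if_neg h]
    ring

lemma jacobi_apply_self (b : ℕ → R) {n : ℕ} (i : Fin n) : jacobi b n i i = b i := by
  simp [jacobi]

lemma jacobi_apply_of_adj (b : ℕ → R) {n : ℕ} {i j : Fin n}
    (h : (j : ℕ) = i + 1 ∨ (i : ℕ) = j + 1) : jacobi b n i j = -1 := by
  simp only [jacobi, of_apply]
  rw [if_neg (by omega)]
  rcases h with h | h
  · rw [if_neg (by omega), if_pos h.symm]; ring
  · rw [if_pos h.symm, if_neg (by omega)]; ring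

lemma jacobi_apply_eq_zero (b : ℕ → R) {n : ℕ} {i j : Fin n}
    (h : (i : ℕ) + 1 < j ∨ (j : ℕ) + 1 < i) : jacobi b n i j = 0 := by
  simp only [jacobi, of_apply]
  rw [if_neg (by omega), if_neg (by omega), if_neg (by omega)]
  ring

lemma jacobi_submatrix_of_val_eq_add {m n : ℕ} (b : ℕ → R) (k : ℕ) (r c : Fin m → Fin n)
    (hr : ∀ i, (r i : ℕ) = i + k) (hc : ∀ j, (c j : ℕ) = j + k) :
    (jacobi b n).submatrix r c = jacobi (fun l => b (l + k)) m := by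
  ext i j
  simp only [submatrix_apply, jacobi, of_apply, hr, hc]
  congr 1; congr 1
  all_goals split_ifs <;> first | rfl | omega

lemma jacobi_submatrix_castSucc (b : ℕ → R) (n : ℕ) :
    (jacobi b (n + 1)).submatrix Fin.castSucc Fin.castSucc = jacobi b n :=
  jacobi_submatrix_of_val_eq_add b 0 _ _ (fun _ => rfl) (fun _ => rfl)

lemma det_jacobi_submatrix_succ_castSucc (b : ℕ → R) (n : ℕ) :
    ((jacobi b (n + 1)).submatrix Fin.succ Fin.castSucc).det = (-1) ^ n := by
  rw [det_of_isUpperTriangular]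
  · simp [jacobi, show ∀ k : ℕ, k + 1 + 1 ≠ k by omega]
  · intro i j hij
    have : (j : ℕ) < i := hij
    simp only [submatrix_apply, jacobi, of_apply, Fin.val_succ, Fin.val_castSucc]
    rw [if_neg (by omega), if_neg (by omega), if_neg (by omega)]
    ring

lemma det_jacobi_submatrix_castSucc_succ (b : ℕ → R) (n : ℕ) :
    ((jacobi b (n + 1)).submatrix Fin.castSucc Fin.succ).det = (-1) ^ n := by
  rw [← jacobi_transpose, ← transpose_submatrix, det_transpose,
    det_jacobi_submatrix_succ_castSucc]

lemma det_jacobi_succ_succ (b : ℕ → R) (n : ℕ) :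
    (jacobi b (n + 2)).det = b (n + 1) * (jacobi b (n + 1)).det - (jacobi b n).det := by
  have hminor : ((jacobi b (n + 2)).submatrix (Fin.last (n + 1)).succAbove
      (Fin.last n).castSucc.succAbove).det = -(jacobi b n).det := by
    rw [det_succ_column _ (Fin.last n), Fin.sum_univ_castSucc, Finset.sum_eq_zero, zero_add]
    · have hsub : (((jacobi b (n + 2)).submatrix (Fin.last (n + 1)).succAbove
          (Fin.last n).castSucc.succAbove).submatrix (Fin.last n).succAbove
          (Fin.last n).succAbove) = jacobi b n := by
        rw [submatrix_submatrix]
        exact jacobi_submatrix_of_val_eq_add b 0 _ _ (fun i => by simp)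
          (fun j => by simp [Fin.succAbove_castSucc_of_lt _ _ (Fin.castSucc_lt_last j)])
      rw [hsub, submatrix_apply, Fin.succAbove_castSucc_self, Fin.succAbove_last,
        jacobi_apply_of_adj b (by simp)]
      simp
    · intro i _
      rw [submatrix_apply, Fin.succAbove_last, Fin.succAbove_castSucc_self,
        jacobi_apply_eq_zero b ?_, mul_zero, zero_mul]
      simp
  rw [det_succ_row _ (Fin.last (n + 1)), Fin.sum_univ_castSucc, Fin.sum_univ_castSucc,
    Finset.sum_eq_zero, zero_add, hminor]
  · simp [jacobi_submatrix_castSucc, jacobi_apply_of_adj, jacobi_apply_self, sub_eq_neg_add,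
      mul_comm]
  · intro j _
    rw [jacobi_apply_eq_zero b ?_, mul_zero, zero_mul]
    simp

def transferMatrix (b : ℕ → R) : ℕ → Matrix (Fin 2) (Fin 2) R
  | 0 => 1
  | n + 1 => !![b n, -1; 1, 0] * transferMatrix b n

lemma transferMatrix_succ_apply_zero (b : ℕ → R) (n : ℕ) (j : Fin 2) :
    transferMatrix b (n + 1) 0 j = b n * transferMatrix b n 0 j - transferMatrix b n 1 j := by
  simp [transferMatrix, mul_apply, Fin.sum_univ_two, sub_eq_add_neg]

lemma transferMatrix_succ_apply_one (b : ℕ → R) (n : ℕ) (j : Fin 2) :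
    transferMatrix b (n + 1) 1 j = transferMatrix b n 0 j := by
  simp [transferMatrix, mul_apply, Fin.sum_univ_two]

lemma transferMatrix_apply_zero_zero (b : ℕ → R) (n : ℕ) :
    transferMatrix b n 0 0 = (jacobi b n).det := by
  induction n using Nat.twoStepInduction with
  | zero => simp [transferMatrix]
  | one => simp [transferMatrix, jacobi]
  | more n ih₀ ih₁ =>
    rw [transferMatrix_succ_apply_zero, transferMatrix_succ_apply_one, ih₁, ih₀,
      det_jacobi_succ_succ]

lemma transferMatrix_succ_apply_zero_one (b : ℕ → R) (n : ℕ) :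
    transferMatrix b (n + 1) 0 1 = -(jacobi (fun k => b (k + 1)) n).det := by
  induction n using Nat.twoStepInduction with
  | zero => simp [transferMatrix]
  | one => simp [transferMatrix, jacobi, mul_apply, Fin.sum_univ_two]
  | more n ih₀ ih₁ =>
    rw [transferMatrix_succ_apply_zero, transferMatrix_succ_apply_one, ih₁, ih₀,
      det_jacobi_succ_succ]
    ring

lemma trace_transferMatrix_add_two (b : ℕ → R) (n : ℕ) :
    (transferMatrix b (n + 2)).trace =
      (jacobi b (n + 2)).det - (jacobi (fun k => b (k + 1)) n).det := by
  rw [trace_fin_two, transferMatrix_succ_apply_one, transferMatrix_succ_apply_zero_one,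
    transferMatrix_apply_zero_zero, sub_eq_add_neg]

lemma transferMatrix_map {S : Type*} [CommRing S] (f : R →+* S) (b : ℕ → R) (n : ℕ) :
    (transferMatrix b n).map f = transferMatrix (fun k => f (b k)) n := by
  induction n with
  | zero => simp [transferMatrix]
  | succ n ih =>
    rw [transferMatrix, transferMatrix, Matrix.map_mul, ih]
    congr 1
    ext i j; fin_cases i <;> fin_cases j <;> simp

-- Additive in the corners: for `n ≤ 2` they fall on entries of `jacobi b n` and add to them,
-- as the two bonds of `ℤ_q` at a site do in `H[κ]`.
def cyclicJacobi (b : ℕ → R) (z w : R) (n : ℕ) : Matrix (Fin n) (Fin n) R :=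
  jacobi b n - of fun i j : Fin n =>
    (if (i : ℕ) = 0 ∧ (j : ℕ) + 1 = n then z else 0) +
      (if (j : ℕ) = 0 ∧ (i : ℕ) + 1 = n then w else 0)

lemma cyclicJacobi_eq_updateRow_updateRow (b : ℕ → R) (z w : R) (m : ℕ) :
    cyclicJacobi b z w (m + 2) = ((jacobi b (m + 2)).updateRow 0
      (jacobi b (m + 2) 0 - z • Pi.single (Fin.last (m + 1)) 1)).updateRow (Fin.last (m + 1))
      (jacobi b (m + 2) (Fin.last (m + 1)) - w • Pi.single 0 1) := by
  ext i j
  simp only [updateRow_apply]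
  split_ifs with hL h0
  · subst hL
    simp [cyclicJacobi, Pi.single_apply, Fin.val_eq_zero_iff]
  · subst h0
    simp [cyclicJacobi, Pi.single_apply, Fin.ext_iff (b := Fin.last _)]
  · rw [Fin.ext_iff, Fin.val_last] at hL
    simp [cyclicJacobi, h0, hL]

lemma det_cyclicJacobi (b : ℕ → R) {z w : R} (hzw : z * w = 1) (n : ℕ) [NeZero n] :
    (cyclicJacobi b z w n).det = (transferMatrix b n).trace - z - w := by
  obtain ⟨n, rfl⟩ := Nat.exists_eq_succ_of_ne_zero (NeZero.ne n)
  rcases n with _ | m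
  · simp [cyclicJacobi, jacobi, transferMatrix, sub_sub]
  rw [cyclicJacobi_eq_updateRow_updateRow, trace_transferMatrix_add_two]
  set T := jacobi b (m + 2)
  set L := Fin.last (m + 1)
  set X := T.updateRow 0 (T 0 - z • Pi.single L 1)
  have hX : X.det = T.det - z := by
    rw [det_updateRow_sub_smul_single, Fin.succAbove_zero, Fin.succAbove_last,
      det_jacobi_submatrix_succ_castSucc]
    simp only [L, Fin.val_zero, Fin.val_last, zero_add, ← mul_pow]
    norm_num
  have hXminor : (X.submatrix L.succAbove (0 : Fin (m + 2)).succAbove).det =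
      (-1) ^ (m + 1) - z * ((-1) ^ m * (jacobi (fun k => b (k + 1)) m).det) := by
    set Y := T.submatrix Fin.castSucc Fin.succ
    have hY : X.submatrix L.succAbove (0 : Fin (m + 2)).succAbove =
        Y.updateRow 0 (Y 0 - z • Pi.single (Fin.last m) 1) := by
      ext i j
      refine Fin.cases ?_ (fun i => ?_) i
      · simp [X, Y, L, Fin.succAbove_last, Pi.single_apply, Fin.ext_iff]
      · simp [X, Y, L, Fin.succAbove_last, Fin.ext_iff]
    rw [hY, det_updateRow_sub_smul_single, det_jacobi_submatrix_castSucc_succ,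
      Fin.succAbove_zero, Fin.succAbove_last, submatrix_submatrix,
      jacobi_submatrix_of_val_eq_add b 1 _ _ (fun i => by simp) (fun j => by simp)]
    simp
  rw [← show X L = T L from updateRow_ne Fin.last_pos.ne', det_updateRow_sub_smul_single, hX,
    hXminor]
  have hs : (-1 : R) ^ m * (-1) ^ m = 1 := by rw [← mul_pow]; norm_num
  simp only [L, Fin.val_zero, Fin.val_last, add_zero, pow_succ]
  linear_combination (-w - w * z * (jacobi (fun k => b (k + 1)) m).det) * hs -
    (jacobi (fun k => b (k + 1)) m).det * hzw

end JacobiMatrix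

lemma ZMod.natCast_eq_natCast_add_one_iff {q a c : ℕ} (ha : a < q) (hc : c < q) :
    (c : ZMod q) = a + 1 ↔ c = a + 1 ∨ (a + 1 = q ∧ c = 0) := by
  rw [← Nat.cast_succ, ZMod.natCast_eq_natCast_iff', Nat.mod_eq_of_lt hc]
  rcases (Nat.succ_le_of_lt ha).lt_or_eq with h | h
  · rw [Nat.mod_eq_of_lt h]
    omega
  · rw [h, Nat.mod_self]
    omega

def finEquivZMod (q : ℕ) [NeZero q] : Fin q ≃ ZMod q where
  toFun i := (i : ℕ)
  invFun x := ⟨x.val, x.val_lt⟩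
  left_inv i := Fin.ext (ZMod.val_cast_of_lt i.isLt)
  right_inv := ZMod.natCast_zmod_val

lemma inv_pow_mul_ite_mul_pow {K : Type*} [Field K] {q : ℕ} [NeZero q] {u : K} (hu : u ≠ 0)
    (i j : Fin q) :
    u⁻¹ ^ (i : ℕ) * (if finEquivZMod q i = finEquivZMod q j + 1 then u else 0) * u ^ (j : ℕ)
      = (if (j : ℕ) + 1 = i then 1 else 0) +
        (if (i : ℕ) = 0 ∧ (j : ℕ) + 1 = q then u ^ q else 0) := by
  simp only [finEquivZMod, Equiv.coe_fn_mk, ZMod.natCast_eq_natCast_add_one_iff j.isLt i.isLt]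
  by_cases h : (j : ℕ) + 1 = i
  · rw [if_pos (Or.inl h.symm), if_pos h, if_neg (by omega), ← h, inv_pow, pow_succ]
    field_simp
    ring
  by_cases h' : (i : ℕ) = 0 ∧ (j : ℕ) + 1 = q
  · rw [if_pos (Or.inr ⟨h'.2, h'.1⟩), if_neg h, if_pos h', h'.1,
    show u ^ q = u ^ ((j : ℕ) + 1) by rw [h'.2], pow_succ]
    ring
  · rw [if_neg (by omega), if_neg h, if_neg h']
    ring

lemma det_smul_one_sub_HqM (q : ℕ) [NeZero q] (V : ZMod q → ℝ) (E κ : ℝ) :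
    ((E : ℂ) • (1 : Matrix (ZMod q) (ZMod q) ℂ) - HqM q V κ).det =
      (cyclicJacobi (fun k : ℕ => ((E - V k : ℝ) : ℂ)) (Complex.exp (κ * Complex.I) ^ q)
        ((Complex.exp (κ * Complex.I))⁻¹ ^ q) q).det := by
  set u := Complex.exp (κ * Complex.I)
  have hu : u ≠ 0 := Complex.exp_ne_zero _
  rw [← det_submatrix_equiv_self (finEquivZMod q),
    ← det_diagonal_mul_mul_diagonal (d := fun i : Fin q => u⁻¹ ^ (i : ℕ))
      (d' := fun i => u ^ (i : ℕ)) (fun i => by simp [hu])]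
  congr 1
  ext i j
  have hdown := inv_pow_mul_ite_mul_pow hu i j
  have hup := inv_pow_mul_ite_mul_pow (inv_ne_zero hu) j i
  rw [inv_inv] at hup
  have hdiag : u⁻¹ ^ (i : ℕ) * ((E : ℂ) * (if i = j then 1 else 0) -
      (if j = i then (V (finEquivZMod q i) : ℂ) else 0)) * u ^ (j : ℕ) =
      if (i : ℕ) = j then ((E - V ((i : ℕ) : ZMod q) : ℝ) : ℂ) else 0 := by
    by_cases h : i = j
    · subst h
      simp [finEquivZMod, mul_right_comm _ _ (u ^ (i : ℕ)), hu]
    · simp [h, Ne.symm h, Fin.val_ne_of_ne h]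
  have hsub (x y : ZMod q) : y = x - 1 ↔ x = y + 1 := eq_sub_iff_add_eq.trans eq_comm
  simp only [diagonal_mul, mul_diagonal, submatrix_apply, Matrix.sub_apply, Matrix.smul_apply,
    one_apply, smul_eq_mul, HqM, (finEquivZMod q).injective.eq_iff, hsub, Complex.exp_neg]
  simp only [cyclicJacobi, jacobi, Matrix.sub_apply, of_apply]
  linear_combination hdiag - hdown - hup

lemma transfer_eq_transferMatrix (V : ℕ → ℝ) (E : ℝ) (n : ℕ) :
    transfer V n E = transferMatrix (fun k => E - V k) n := by
  induction n with
  | zero => rfl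
  | succ n ih => rw [transfer, transferMatrix, ih]; rfl

lemma ofReal_disc (V : ℕ → ℝ) (n : ℕ) (E : ℝ) :
    ((disc V n E : ℝ) : ℂ) = (transferMatrix (fun k => ((E - V k : ℝ) : ℂ)) n).trace := by
  simpa [disc, transfer_eq_transferMatrix, trace_fin_two] using
    congrArg trace (transferMatrix_map Complex.ofRealHom (fun k => E - V k) n)

/-- the characteristic polynomial of the Floquet operator `H[κ]` is
`det(E·I - H[κ]) = Tr Φ_q(E) - 2 cos(qκ)`. -/
theorem floquet_charpoly (q : ℕ) [NeZero q] (V : ZMod q → ℝ) (E κ : ℝ) :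
    Matrix.det ((E : ℂ) • (1 : Matrix (ZMod q) (ZMod q) ℂ) - HqM q V κ) =
      ((disc (fun k : ℕ => V (k : ZMod q)) q E : ℝ) : ℂ) - 2 * Real.cos (q * κ) := by
  set u := Complex.exp (κ * Complex.I)
  have hzw : u ^ q * u⁻¹ ^ q = 1 := by
    rw [← mul_pow, mul_inv_cancel₀ (Complex.exp_ne_zero _), one_pow]
  have hcos : 2 * (Real.cos (q * κ) : ℂ) = u ^ q + u⁻¹ ^ q := by
    rw [Complex.ofReal_cos, Complex.two_cos, ← Complex.exp_neg, ← Complex.exp_nat_mul,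
      ← Complex.exp_nat_mul]
    push_cast
    ring_nf
  rw [det_smul_one_sub_HqM, det_cyclicJacobi _ hzw, ofReal_disc, hcos]
  ring

end
end
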